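/- Let U, w ≥ 1, let k = 2m+1 be odd, let f : Fin U → ℤ, let σ ≥ 0, and fix an item x ∈ Fin U. Suppose the random variables (h_r(y))_{r ∈ Fin k, y ∈ Fin U} are i.i.d. uniform on Fin w, the random variables (g_r(y))_{r ∈ Fin k, y ∈ Fin U} are i.i.d. uniform on {−1,+1}, the random variables (η[r,c])_{r ∈ Fin k, c ∈ Fin w} are i.i.d. N(0, σ²), and these three families are mutually independent. Define the private CountSketch estimate f̂(x) = median_{r ∈ Fin k} g_r(x)·( Σ_{y ∈ Fin U} f(y)·g_r(y)·1{h_r(y) = h_r(x)} + η[r, h_r(x)] ). Then the law of f̂(x) − f(x) is symmetric about 0: the pushforward of the distribution of f̂(x) − f(x) under the map t ↦ −t equals that distribution. -/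

import Mathlib

/-!
Flip the signs `g_r(y)` for `y ≠ x` and negate every noise entry `η[r,c]`. By independence and
the symmetry of the Rademacher and centred Gaussian laws this leaves the joint law of all the
random variables unchanged. Since `g_r(x)² = 1`, it sends each row estimate `a_r` to
`2 f(x) - a_r`, and the median commutes with the decreasing map `t ↦ 2 f(x) - t`, so it sends
`f̂(x) - f(x)` to its negative.
-/

open MeasureTheory ProbabilityTheory Real
open scoped ENNReal NNReal

/-- The median of a tuple of `2m+1` reals: its `(m+1)`-st smallest entry with multiplicity. -/
noncomputable def median {m : ℕ} (a : Fin (2 * m + 1) → ℝ) : ℝ :=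
  (Multiset.sort (Multiset.map a Finset.univ.val) (· ≤ ·))[m]'(by
    simp [Multiset.length_sort]; omega)

/-- Index type for the random variables of a private CountSketch with `k` rows, universe size
`U` and `w` columns: hash values `h_r(y)`, sign values `g_r(y)` and noise values `η[r,c]`. -/
inductive CSIdx (k U w : ℕ) : Type
  | hash : Fin k → Fin U → CSIdx k U w
  | sign : Fin k → Fin U → CSIdx k U w
  | noise : Fin k → Fin w → CSIdx k U w

/-- Codomain of each random variable: hash values live in `Fin w`, signs and noises in `ℝ`. -/
def CSIdx.codomain {k U w : ℕ} : CSIdx k U w → Type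
  | .hash _ _ => Fin w
  | .sign _ _ => ℝ
  | .noise _ _ => ℝ

instance {k U w : ℕ} (i : CSIdx k U w) : MeasurableSpace i.codomain :=
  match i with
  | .hash _ _ => inferInstanceAs (MeasurableSpace (Fin w))
  | .sign _ _ => inferInstanceAs (MeasurableSpace ℝ)
  | .noise _ _ => inferInstanceAs (MeasurableSpace ℝ)

/-- The combined family of random variables of a private CountSketch. -/
def CSVars {Ω : Type*} {k U w : ℕ} (h : Fin k → Fin U → Ω → Fin w)
    (g : Fin k → Fin U → Ω → ℝ) (η : Fin k → Fin w → Ω → ℝ) :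
    ∀ i : CSIdx k U w, Ω → i.codomain
  | .hash r y => h r y
  | .sign r y => g r y
  | .noise r c => η r c

theorem List.SortedLE.getElem_le_iff_lt_countP {α : Type*} [LinearOrder α] {l : List α}
    (hl : l.SortedLE) {i : ℕ} (hi : i < l.length) (t : α) :
    l[i] ≤ t ↔ i < l.countP (· ≤ t) := by
  have hsplit (n : ℕ) :
      l.countP (· ≤ t) = (l.take n).countP (· ≤ t) + (l.drop n).countP (· ≤ t) := by
    rw [← List.countP_append, List.take_append_drop]
  constructor
  · intro hle
    have htake : (l.take (i + 1)).countP (· ≤ t) = i + 1 := by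
      rw [List.countP_eq_length.mpr, List.length_take_of_le hi]
      intro y hy
      obtain ⟨j, hj, rfl⟩ := List.mem_iff_getElem.mp hy
      simp only [List.getElem_take, decide_eq_true_eq]
      exact (hl.getElem_le_getElem_of_le (by simp at hj; omega)).trans hle
    rw [hsplit (i + 1)]
    omega
  · intro hcount
    by_contra! hlt
    have hdrop : (l.drop i).countP (· ≤ t) = 0 := by
      rw [List.countP_eq_zero]
      intro y hy
      obtain ⟨j, hj, rfl⟩ := List.mem_iff_getElem.mp hy
      simp only [List.getElem_drop, decide_eq_true_eq, not_le]
      exact hlt.trans_le (hl.getElem_le_getElem_of_le (by omega))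
    have htake : (l.take i).countP (· ≤ t) ≤ i :=
      List.countP_le_length.trans (List.length_take_le i l)
    rw [hsplit i] at hcount
    omega

theorem median_le_iff {m : ℕ} (a : Fin (2 * m + 1) → ℝ) (t : ℝ) :
    median a ≤ t ↔ m < (Finset.univ.filter fun r => a r ≤ t).card := by
  have hsorted : (Multiset.sort (Multiset.map a Finset.univ.val) (· ≤ ·)).SortedLE :=
    List.sortedLE_iff_pairwise.mpr (Multiset.pairwise_sort _ _)
  rw [median, hsorted.getElem_le_iff_lt_countP, ← Multiset.coe_countP, Multiset.sort_eq,
    Multiset.countP_map, Finset.card_def, Finset.filter_val]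

theorem measurable_median {m : ℕ} : Measurable (median (m := m)) := by
  refine measurable_of_Iic fun t => ?_
  have hcard : Measurable fun a : Fin (2 * m + 1) → ℝ =>
      (Finset.univ.filter fun r => a r ≤ t).card := by
    simp_rw [Finset.card_filter]
    exact Finset.measurable_sum _ fun r _ => Measurable.ite
      (measurableSet_le (measurable_pi_apply r) measurable_const) measurable_const measurable_const
  simpa [Set.preimage, median_le_iff] using hcard (MeasurableSet.of_discrete (s := {n | m < n}))

theorem median_comp_antitone {m : ℕ} {φ : ℝ → ℝ} (hφ : Antitone φ)
    (a : Fin (2 * m + 1) → ℝ) :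
    median (fun r => φ (a r)) = φ (median a) := by
  set l := Multiset.sort (Multiset.map a Finset.univ.val) (· ≤ ·) with hl
  have hlen : l.length = 2 * m + 1 := by simp [hl]
  have hsort : Multiset.sort (Multiset.map (fun r => φ (a r)) Finset.univ.val) (· ≤ ·)
      = (l.map φ).reverse := by
    refine List.Perm.eq_of_sortedLE
      (List.sortedLE_iff_pairwise.mpr (Multiset.pairwise_sort _ _))
      (List.sortedLE_reverse.mpr (List.sortedGE_iff_pairwise.mpr
        ((Multiset.pairwise_sort _ _).map φ fun _ _ h => hφ h)))
      (Multiset.coe_eq_coe.mp ?_)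
    rw [Multiset.sort_eq, Multiset.coe_reverse, ← Multiset.map_coe, hl, Multiset.sort_eq,
      Multiset.map_map]
    rfl
  simp only [median, hsort, List.getElem_reverse, List.getElem_map, List.length_map, hlen]
  congr 2
  omega

noncomputable def rademacher : Measure ℝ :=
  (2 : ℝ≥0∞)⁻¹ • (Measure.dirac 1 + Measure.dirac (-1))

theorem rademacher_map_neg : rademacher.map (fun t => -t) = rademacher := by
  rw [rademacher, Measure.map_smul, Measure.map_add _ _ measurable_neg,
    Measure.map_dirac' measurable_neg, Measure.map_dirac' measurable_neg, neg_neg, add_comm]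

theorem ae_rademacher : ∀ᵐ t ∂rademacher, t = 1 ∨ t = -1 := by
  rw [rademacher]
  refine Measure.ae_smul_measure (ae_add_measure_iff.mpr ⟨?_, ?_⟩) _ <;> simp [ae_dirac_eq]

theorem MeasureTheory.MeasurePreserving.map_of_ae_semiconj {α β : Type*} [MeasurableSpace α]
    [MeasurableSpace β] {μ : Measure α} {R : α → α} {Φ : α → β} {N : β → β}
    (hR : MeasurePreserving R μ μ) (hΦ : Measurable Φ) (hN : Measurable N)
    (h : ∀ᵐ a ∂μ, Φ (R a) = N (Φ a)) : MeasurePreserving N (μ.map Φ) (μ.map Φ) := by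
  refine ⟨hN, ?_⟩
  calc (μ.map Φ).map N = μ.map (N ∘ Φ) := Measure.map_map hN hΦ
    _ = μ.map (Φ ∘ R) := Measure.map_congr (h.mono fun a ha => ha.symm)
    _ = μ.map Φ := by rw [← Measure.map_map hΦ hR.measurable, hR.map_eq]

def CSIdx.equivSum (k U w : ℕ) :
    CSIdx k U w ≃ (Fin k × Fin U) ⊕ (Fin k × Fin U) ⊕ (Fin k × Fin w) where
  toFun
    | .hash r y => .inl (r, y)
    | .sign r y => .inr (.inl (r, y))
    | .noise r c => .inr (.inr (r, c))
  invFun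
    | .inl (r, y) => .hash r y
    | .inr (.inl (r, y)) => .sign r y
    | .inr (.inr (r, c)) => .noise r c
  left_inv i := by cases i <;> rfl
  right_inv s := by rcases s with ⟨r, y⟩ | ⟨r, y⟩ | ⟨r, c⟩ <;> rfl

instance {k U w : ℕ} : Fintype (CSIdx k U w) := Fintype.ofEquiv _ (CSIdx.equivSum k U w).symm

def CSIdx.reflect {k U w : ℕ} (x : Fin U) : (i : CSIdx k U w) → i.codomain → i.codomain
  | .hash _ _ => id
  | .sign _ y => fun s : ℝ => if y = x then s else -s
  | .noise _ _ => fun n : ℝ => -n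

abbrev CSOutcome (k U w : ℕ) : Type := ∀ i : CSIdx k U w, i.codomain

namespace CSOutcome

variable {k U w : ℕ}

def hash (v : CSOutcome k U w) (r : Fin k) (y : Fin U) : Fin w := v (.hash r y)

def sign (v : CSOutcome k U w) (r : Fin k) (y : Fin U) : ℝ := v (.sign r y)

def noise (v : CSOutcome k U w) (r : Fin k) (c : Fin w) : ℝ := v (.noise r c)

@[fun_prop]
theorem measurable_hash (r : Fin k) (y : Fin U) :
    Measurable fun v : CSOutcome k U w => v.hash r y :=
  measurable_pi_apply _

@[fun_prop]
theorem measurable_sign (r : Fin k) (y : Fin U) :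
    Measurable fun v : CSOutcome k U w => v.sign r y :=
  measurable_pi_apply _

@[fun_prop]
theorem measurable_noise (r : Fin k) (c : Fin w) :
    Measurable fun v : CSOutcome k U w => v.noise r c :=
  measurable_pi_apply _

def rowEstimate (f : Fin U → ℤ) (x : Fin U) (v : CSOutcome k U w) (r : Fin k) : ℝ :=
  v.sign r x *
    ((∑ y : Fin U, (f y : ℝ) * v.sign r y * (if v.hash r y = v.hash r x then 1 else 0))
      + v.noise r (v.hash r x))

theorem measurable_rowEstimate (f : Fin U → ℤ) (x : Fin U) :
    Measurable (rowEstimate (w := w) (k := k) f x) := by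
  refine measurable_pi_lambda _ fun r => ?_
  have hcollide (y : Fin U) :
      Measurable fun v : CSOutcome k U w => if v.hash r y = v.hash r x then (1 : ℝ) else 0 :=
    Measurable.ite (measurableSet_eq_fun (by fun_prop) (by fun_prop)) measurable_const
      measurable_const
  have hnoise : Measurable fun v : CSOutcome k U w => v.noise r (v.hash r x) :=
    (measurable_from_prod_countable_left (f := fun p : CSOutcome k U w × Fin w => p.1.noise r p.2)
      fun c => measurable_noise r c).comp (measurable_id.prodMk (measurable_hash r x))
  unfold rowEstimate
  fun_prop

theorem measurable_median_rowEstimate {m : ℕ} (f : Fin U → ℤ) (x : Fin U) :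
    Measurable fun v : CSOutcome (2 * m + 1) U w => median (rowEstimate f x v) :=
  measurable_median.comp (measurable_rowEstimate f x)

def reflect (x : Fin U) (v : CSOutcome k U w) : CSOutcome k U w := fun i => i.reflect x (v i)

theorem sign_reflect (x : Fin U) (v : CSOutcome k U w) (r : Fin k) (y : Fin U) :
    (v.reflect x).sign r y = if y = x then v.sign r y else -v.sign r y := rfl

theorem rowEstimate_reflect (f : Fin U → ℤ) (x : Fin U) (v : CSOutcome k U w) (r : Fin k)
    (hv : v.sign r x = 1 ∨ v.sign r x = -1) :
    rowEstimate f x (v.reflect x) r = 2 * f x - rowEstimate f x v r := by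
  set e : Fin U → ℝ := fun y => if v.hash r y = v.hash r x then 1 else 0
  show (v.reflect x).sign r x * ((∑ y, (f y : ℝ) * (v.reflect x).sign r y * e y)
      + -v.noise r (v.hash r x))
    = 2 * f x - v.sign r x * ((∑ y, (f y : ℝ) * v.sign r y * e y) + v.noise r (v.hash r x))
  have hsq : v.sign r x * v.sign r x = 1 := by rcases hv with h | h <;> simp [h]
  have hflip : ∑ y ∈ Finset.univ.erase x, (f y : ℝ) * (v.reflect x).sign r y * e y
      = -∑ y ∈ Finset.univ.erase x, (f y : ℝ) * v.sign r y * e y := by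
    rw [← Finset.sum_neg_distrib]
    refine Finset.sum_congr rfl fun y hy => ?_
    rw [sign_reflect, if_neg (Finset.ne_of_mem_erase hy)]
    ring
  rw [← Finset.add_sum_erase _ _ (Finset.mem_univ x),
    ← Finset.add_sum_erase _ _ (Finset.mem_univ x), hflip, sign_reflect, if_pos rfl,
    show e x = 1 from if_pos rfl]
  linear_combination (2 * (f x : ℝ)) * hsq

theorem measurePreserving_reflect (x : Fin U) (ν : ∀ i : CSIdx k U w, Measure i.codomain)
    [∀ i, SigmaFinite (ν i)]
    (hsign : ∀ r y, y ≠ x → (ν (.sign r y)).map (fun s : ℝ => -s) = ν (.sign r y))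
    (hnoise : ∀ r c, (ν (.noise r c)).map (fun n : ℝ => -n) = ν (.noise r c)) :
    MeasurePreserving (reflect x) (Measure.pi ν) (Measure.pi ν) := by
  refine measurePreserving_pi ν ν fun i => ?_
  rcases i with ⟨r, y⟩ | ⟨r, y⟩ | ⟨r, c⟩
  · exact MeasurePreserving.id _
  · show MeasurePreserving (fun s : ℝ => if y = x then s else -s) _ _
    by_cases hy : y = x
    · simp only [hy, ↓reduceIte]
      exact MeasurePreserving.id _
    · simp only [hy, ↓reduceIte]
      exact ⟨measurable_neg, hsign r y hy⟩
  · exact ⟨(measurable_neg : Measurable fun n : ℝ => -n), hnoise r c⟩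

theorem measurePreserving_neg_map_median_rowEstimate_sub {m : ℕ} (f : Fin U → ℤ) (x : Fin U)
    (ν : ∀ i : CSIdx (2 * m + 1) U w, Measure i.codomain) [∀ i, SigmaFinite (ν i)]
    (hsign : ∀ r y, ν (.sign r y) = rademacher)
    (hnoise : ∀ r c, (ν (.noise r c)).map (fun n : ℝ => -n) = ν (.noise r c)) :
    MeasurePreserving (fun t : ℝ => -t)
      ((Measure.pi ν).map fun v => median (rowEstimate f x v) - f x)
      ((Measure.pi ν).map fun v => median (rowEstimate f x v) - f x) := by
  have hsigns : ∀ᵐ v : CSOutcome (2 * m + 1) U w ∂Measure.pi ν,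
      ∀ r, v.sign r x = 1 ∨ v.sign r x = -1 := by
    refine ae_all_iff.mpr fun r => ?_
    have hr : ∀ᵐ s ∂ν (.sign r x), (s : ℝ) = 1 ∨ s = -1 := by
      rw [hsign]
      exact ae_rademacher
    exact Measure.tendsto_eval_ae_ae.eventually hr
  refine MeasurePreserving.map_of_ae_semiconj
    (measurePreserving_reflect x ν (fun r y _ => by rw [hsign]; exact rademacher_map_neg) hnoise)
    ((measurable_median_rowEstimate f x).sub_const _) measurable_neg
    (hsigns.mono fun v hv => ?_)
  have hrows : rowEstimate f x (v.reflect x) = fun r => 2 * f x - rowEstimate f x v r :=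
    funext fun r => rowEstimate_reflect f x v r (hv r)
  simp only [hrows, median_comp_antitone (fun _ _ h => sub_le_sub_left h _)]
  ring

end CSOutcome

theorem stmt5_general {Ω : Type*} [MeasurableSpace Ω] (P : Measure Ω) [IsProbabilityMeasure P]
    (m U w : ℕ)
    (f : Fin U → ℤ) (σ : ℝ) (x : Fin U)
    (h : Fin (2 * m + 1) → Fin U → Ω → Fin w)
    (g : Fin (2 * m + 1) → Fin U → Ω → ℝ)
    (η : Fin (2 * m + 1) → Fin w → Ω → ℝ)
    (hmeas : ∀ i : CSIdx (2 * m + 1) U w, Measurable (CSVars h g η i))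
    (hindep : iIndepFun (CSVars h g η) P)
    (hdistg : ∀ r y, Measure.map (g r y) P
      = (2 : ℝ≥0∞)⁻¹ • (Measure.dirac (1 : ℝ) + Measure.dirac (-1 : ℝ)))
    (hdistη : ∀ r c, Measure.map (η r c) P = gaussianReal 0 ⟨σ ^ 2, sq_nonneg σ⟩)
    (fhat : Ω → ℝ)
    (hfh : ∀ ω, fhat ω = median (fun r =>
      g r x ω * ((∑ y : Fin U, (f y : ℝ) * g r y ω * (if h r y ω = h r x ω then 1 else 0))
        + η r (h r x ω) ω))) :
    Measure.map (fun t : ℝ => -t) (Measure.map (fun ω => fhat ω - (f x : ℝ)) P)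
      = Measure.map (fun ω => fhat ω - (f x : ℝ)) P := by
  have : ∀ i, IsProbabilityMeasure (P.map (CSVars h g η i)) :=
    fun i => Measure.isProbabilityMeasure_map (hmeas i).aemeasurable
  have hestimate : (fun ω => fhat ω - f x) = (fun v : CSOutcome (2 * m + 1) U w =>
      median (CSOutcome.rowEstimate f x v) - f x) ∘ fun ω i => CSVars h g η i ω :=
    funext fun ω => by rw [hfh]; rfl
  rw [hestimate, ← Measure.map_map ((CSOutcome.measurable_median_rowEstimate f x).sub_const _)
    (measurable_pi_lambda _ hmeas), hindep.map_fun_eq_pi_map fun i => (hmeas i).aemeasurable]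
  refine (CSOutcome.measurePreserving_neg_map_median_rowEstimate_sub f x
    (fun i => P.map (CSVars h g η i)) (fun r y => hdistg r y) fun r c => ?_).map_eq
  show (P.map (η r c)).map (fun n : ℝ => -n) = P.map (η r c)
  rw [hdistη]
  exact gaussianReal_map_neg.trans (by rw [neg_zero])

/-- **Statement 4.** The private CountSketch frequency estimate, built from fully random hashes
uniform on `Fin w`, fully random signs uniform on `{-1,+1}`, and independent `N(0,σ²)` noise,
all mutually independent, has a law symmetric about `f(x)`: the distribution of
`f̂(x) - f(x)` is invariant under `t ↦ -t`. -/
theorem stmt5 {Ω : Type*} [MeasurableSpace Ω] (P : Measure Ω) [IsProbabilityMeasure P]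
    (m U w : ℕ) (hU : 1 ≤ U) (hw : 1 ≤ w)
    (f : Fin U → ℤ) (σ : ℝ) (hσ : 0 ≤ σ) (x : Fin U)
    (h : Fin (2 * m + 1) → Fin U → Ω → Fin w)
    (g : Fin (2 * m + 1) → Fin U → Ω → ℝ)
    (η : Fin (2 * m + 1) → Fin w → Ω → ℝ)
    (hmeas : ∀ i : CSIdx (2 * m + 1) U w, Measurable (CSVars h g η i))
    (hindep : iIndepFun (CSVars h g η) P)
    (hdisth : ∀ r y, Measure.map (h r y) P = (w : ℝ≥0∞)⁻¹ • Measure.count)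
    (hdistg : ∀ r y, Measure.map (g r y) P
      = (2 : ℝ≥0∞)⁻¹ • (Measure.dirac (1 : ℝ) + Measure.dirac (-1 : ℝ)))
    (hdistη : ∀ r c, Measure.map (η r c) P = gaussianReal 0 ⟨σ ^ 2, sq_nonneg σ⟩)
    (fhat : Ω → ℝ)
    (hfh : ∀ ω, fhat ω = median (fun r =>
      g r x ω * ((∑ y : Fin U, (f y : ℝ) * g r y ω * (if h r y ω = h r x ω then 1 else 0))
        + η r (h r x ω) ω))) :
    Measure.map (fun t : ℝ => -t) (Measure.map (fun ω => fhat ω - (f x : ℝ)) P)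
      = Measure.map (fun ω => fhat ω - (f x : ℝ)) P :=
  stmt5_general P m U w f σ x h g η hmeas hindep hdistg hdistη fhat hfh
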